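/- arXiv:2510.09325 — 5 statements merged into one kernel-verified Lean document; each statement's English description precedes it below -/
import Mathlib

section
/- Let ε ∈ (0,1] and β ∈ [0,1], and let q_β := 1/2 − (2βε/(8+4ε) + (1−β)ε/(8+2ε)). Then Exploit_{2ε}(q_β) ≥ (2ε/15)(1−β) and Exploit_ε(q_β) ≥ (2ε/15)β. -/
/-! `q_β` is the convex combination `β q*_{2ε} + (1-β) q*_ε` of the column equilibria
`q*_Δ = 2/(4+Δ)` of the two games, and `Exploit_Δ(q)` is `(2+Δ)(q - q*_Δ)` to the right of
`q*_Δ` and `2(q*_Δ - q)` to its left. Hence `Exploit_{2ε}(q_β) ≥ (2+2ε)(1-β)g` and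
`Exploit_ε(q_β) ≥ 2βg` with `g = q*_ε - q*_{2ε} = 2ε/((4+ε)(4+2ε)) ≥ ε/15` for `ε ≤ 1`. -/

/-- Exploitability of the column strategy `q` in the perturbed Matching Pennies game
with payoff matrix `[[1+Δ, −1], [−1, 1]]`:
`Exploit_Δ(q) := max{(2+Δ)q − 1, 1 − 2q} − v_Δ` with Nash value `v_Δ := (Δ/2)/(2+Δ/2)`. -/
noncomputable def exploit (Δ q : ℝ) : ℝ :=
  max ((2 + Δ) * q - 1) (1 - 2 * q) - (Δ / 2) / (2 + Δ / 2)

noncomputable def nashEq (Δ : ℝ) : ℝ := 2 / (4 + Δ)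

lemma exploit_eq_max_sub_nashEq {Δ : ℝ} (hΔ : 4 + Δ ≠ 0) (q : ℝ) :
    exploit Δ q = max ((2 + Δ) * (q - nashEq Δ)) (2 * (nashEq Δ - q)) := by
  have hv : Δ / 2 / (2 + Δ / 2) = Δ / (4 + Δ) := by
    rw [show 2 + Δ / 2 = (4 + Δ) / 2 by ring, div_div_div_cancel_right₀ two_ne_zero]
  have hleft : (2 + Δ) * q - 1 - Δ / (4 + Δ) = (2 + Δ) * (q - nashEq Δ) := by
    unfold nashEq; field_simp; ring
  have hright : 1 - 2 * q - Δ / (4 + Δ) = 2 * (nashEq Δ - q) := by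
    unfold nashEq; field_simp; ring
  rw [exploit, hv, ← hleft, ← hright, max_sub_sub_right]

lemma half_sub_eq_convex_comb_nashEq {ε : ℝ} (hε : 0 ≤ ε) (β : ℝ) :
    1 / 2 - (2 * β * ε / (8 + 4 * ε) + (1 - β) * ε / (8 + 2 * ε)) =
      β * nashEq (2 * ε) + (1 - β) * nashEq ε := by
  have h₁ : 8 + 4 * ε ≠ 0 := by positivity
  have h₂ : 8 + 2 * ε ≠ 0 := by positivity
  have h₃ : 4 + 2 * ε ≠ 0 := by positivity
  have h₄ : 4 + ε ≠ 0 := by positivity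
  unfold nashEq
  field_simp
  ring

lemma div_fifteen_le_nashEq_sub_nashEq_two_mul {ε : ℝ} (hε₀ : 0 ≤ ε) (hε₁ : ε ≤ 1) :
    ε / 15 ≤ nashEq ε - nashEq (2 * ε) := by
  have h₁ : 0 < 4 + ε := by positivity
  have h₂ : 0 < 4 + 2 * ε := by positivity
  have hgap : nashEq ε - nashEq (2 * ε) = 2 * ε / ((4 + ε) * (4 + 2 * ε)) := by
    unfold nashEq; field_simp; ring
  rw [hgap, div_le_div_iff₀ (by norm_num) (by positivity)]
  nlinarith [mul_nonneg hε₀ (sub_nonneg.2 hε₁)]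

/-- for ε ∈ (0,1], β ∈ [0,1] and
`q_β := 1/2 − (2βε/(8+4ε) + (1−β)ε/(8+2ε))`, one has
`Exploit_{2ε}(q_β) ≥ (2ε/15)(1−β)` and `Exploit_ε(q_β) ≥ (2ε/15)β`. -/
theorem stmt_8 (ε : ℝ) (hε : ε ∈ Set.Ioc (0 : ℝ) 1) (β : ℝ) (hβ : β ∈ Set.Icc (0 : ℝ) 1)
    (q : ℝ) (hq : q = 1 / 2 - (2 * β * ε / (8 + 4 * ε) + (1 - β) * ε / (8 + 2 * ε))) :
    (2 * ε / 15) * (1 - β) ≤ exploit (2 * ε) q ∧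
    (2 * ε / 15) * β ≤ exploit ε q := by
  obtain ⟨hε₀, hε₁⟩ := hε
  obtain ⟨hβ₀, hβ₁⟩ := hβ
  rw [half_sub_eq_convex_comb_nashEq hε₀.le] at hq
  have hgap := div_fifteen_le_nashEq_sub_nashEq_two_mul hε₀.le hε₁
  constructor
  · rw [exploit_eq_max_sub_nashEq (by positivity)]
    refine le_max_of_le_left ?_
    have hdist : q - nashEq (2 * ε) = (1 - β) * (nashEq ε - nashEq (2 * ε)) := by
      rw [hq]; ring
    rw [hdist]
    nlinarith [mul_nonneg (sub_nonneg.2 hβ₁) hε₀.le, mul_le_mul_of_nonneg_left hgap (sub_nonneg.2 hβ₁)]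
  · rw [exploit_eq_max_sub_nashEq (by positivity)]
    refine le_max_of_le_right ?_
    have hdist : nashEq ε - q = β * (nashEq ε - nashEq (2 * ε)) := by
      rw [hq]; ring
    rw [hdist]
    nlinarith [mul_le_mul_of_nonneg_left hgap hβ₀]
end

section
/- Let ε > 0. For every q ∈ [0,1], max{Exploit_{2ε}(q), Exploit_ε(q)} ≥ 2ε(1+ε)/((2+ε)²(4+ε)), with equality at q = q*_ε := (2 + ε/(2+ε) − ε/(4+ε))/(2(2+ε)). -/
/-- for ε > 0 and every `q ∈ [0,1]`,
`max{Exploit_{2ε}(q), Exploit_ε(q)} ≥ 2ε(1+ε)/((2+ε)²(4+ε))`, with equality at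
`q = q*_ε := (2 + ε/(2+ε) − ε/(4+ε))/(2(2+ε))`. -/
theorem stmt_12 (ε : ℝ) (hε : 0 < ε) :
    (∀ q ∈ Set.Icc (0 : ℝ) 1,
        2 * ε * (1 + ε) / ((2 + ε) ^ 2 * (4 + ε)) ≤ max (exploit (2 * ε) q) (exploit ε q)) ∧
    max (exploit (2 * ε) ((2 + ε / (2 + ε) - ε / (4 + ε)) / (2 * (2 + ε))))
        (exploit ε ((2 + ε / (2 + ε) - ε / (4 + ε)) / (2 * (2 + ε)))) =
      2 * ε * (1 + ε) / ((2 + ε) ^ 2 * (4 + ε)) := by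
  have hd1 : (0:ℝ) < 2 + ε := by linarith
  have hd2 : (0:ℝ) < 4 + ε := by linarith
  have hv1 : (2 * ε / 2) / (2 + 2 * ε / 2) = ε / (2 + ε) := by
    rw [mul_div_cancel_left₀ _ (two_ne_zero)]
  have hv2 : (ε / 2) / (2 + ε / 2) = ε / (4 + ε) := by
    rw [div_div, div_eq_div_iff (by positivity) (by positivity)]; ring
  constructor
  · intro q hq
    have hX : (2 + 2*ε) * q - 1 - ε/(2+ε) ≤ exploit (2*ε) q := by
      unfold exploit
      rw [hv1]
      have := le_max_left ((2 + 2*ε) * q - 1) (1 - 2 * q)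
      linarith
    have hY : 1 - 2*q - ε/(4+ε) ≤ exploit ε q := by
      unfold exploit
      rw [hv2]
      have := le_max_right ((2 + ε) * q - 1) (1 - 2 * q)
      linarith
    set X := (2 + 2*ε) * q - 1 - ε/(2+ε) with hXd
    set Y := 1 - 2*q - ε/(4+ε) with hYd
    set B := 2 * ε * (1 + ε) / ((2 + ε) ^ 2 * (4 + ε)) with hBd
    have key2 : X + (1+ε) * Y = (2+ε) * B := by
      rw [hXd, hYd, hBd]
      field_simp
      ring
    rcases le_total X Y with h | h
    · have h' : (2+ε) * B ≤ (2+ε) * Y := by nlinarith [key2, h]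
      have := le_of_mul_le_mul_left h' hd1
      calc B ≤ Y := this
        _ ≤ exploit ε q := hY
        _ ≤ max (exploit (2 * ε) q) (exploit ε q) := le_max_right _ _
    · have h' : (2+ε) * B ≤ (2+ε) * X := by
        nlinarith [key2, mul_le_mul_of_nonneg_left h (by linarith : (0:ℝ) ≤ 1 + ε)]
      have := le_of_mul_le_mul_left h' hd1
      calc B ≤ X := this
        _ ≤ exploit (2*ε) q := hX
        _ ≤ max (exploit (2 * ε) q) (exploit ε q) := le_max_left _ _
  · set q0 : ℝ := (2 + ε / (2 + ε) - ε / (4 + ε)) / (2 * (2 + ε)) with hq0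
    have key3 : (2 + 2*ε)*q0 - 1 - (1 - 2*q0) = 2*ε/((2+ε)*(4+ε)) := by
      rw [hq0]; field_simp; ring
    have key4 : 1 - 2*q0 - ((2+ε)*q0 - 1) = ε*(1+ε)/((2+ε)^2) := by
      rw [hq0]; field_simp; ring
    have h1 : exploit (2*ε) q0 = 2 * ε * (1 + ε) / ((2 + ε) ^ 2 * (4 + ε)) := by
      unfold exploit
      rw [hv1, max_eq_left]
      · rw [hq0]; field_simp; ring
      · have : (0:ℝ) ≤ 2*ε/((2+ε)*(4+ε)) := by positivity
        linarith
    have h2 : exploit ε q0 = 2 * ε * (1 + ε) / ((2 + ε) ^ 2 * (4 + ε)) := by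
      unfold exploit
      rw [hv2, max_eq_right]
      · rw [hq0]; field_simp; ring
      · have : (0:ℝ) ≤ ε*(1+ε)/((2+ε)^2) := by positivity
        linarith
    rw [h1, h2, max_self]
end

section
/- Let ε ∈ (0,1] and α ∈ [0,1], and set r := 1/2 − 2αε/(8+4ε) and s := 1/2 − αε/(8+2ε). Then r, s ∈ (0,1) and the chi-squared divergence between Bernoulli(r) and Bernoulli(s) satisfies (r−s)²/(s(1−s)) ≤ ε²/8. -/
set_option maxHeartbeats 1000000


/-- for ε ∈ (0,1] and α ∈ [0,1], setting
`r := 1/2 − 2αε/(8+4ε)` and `s := 1/2 − αε/(8+2ε)`, one has `r, s ∈ (0,1)` and the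
chi-squared divergence between Bernoulli(r) and Bernoulli(s) satisfies
`(r−s)²/(s(1−s)) ≤ ε²/8`. -/
theorem stmt_14 (ε : ℝ) (hε : ε ∈ Set.Ioc (0 : ℝ) 1) (α : ℝ) (hα : α ∈ Set.Icc (0 : ℝ) 1)
    (r s : ℝ) (hr : r = 1 / 2 - 2 * α * ε / (8 + 4 * ε))
    (hs : s = 1 / 2 - α * ε / (8 + 2 * ε)) :
    r ∈ Set.Ioo (0 : ℝ) 1 ∧ s ∈ Set.Ioo (0 : ℝ) 1 ∧
    (r - s) ^ 2 / (s * (1 - s)) ≤ ε ^ 2 / 8 := by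
  obtain ⟨hε0, hε1⟩ := hε
  obtain ⟨hα0, hα1⟩ := hα
  have h4 : (0:ℝ) < 8 + 4 * ε := by linarith
  have h2 : (0:ℝ) < 8 + 2 * ε := by linarith
  have hαε : α * ε ≤ 1 := by nlinarith
  have hαε0 : 0 ≤ α * ε := by positivity
  subst hr hs
  have hrpos : (0:ℝ) < 1 / 2 - 2 * α * ε / (8 + 4 * ε) := by
    rw [sub_pos, div_lt_iff₀ h4]; nlinarith
  have hr1 : 1 / 2 - 2 * α * ε / (8 + 4 * ε) < 1 := by
    have : 0 ≤ 2 * α * ε / (8 + 4 * ε) := by positivity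
    linarith
  have hspos : (0:ℝ) < 1 / 2 - α * ε / (8 + 2 * ε) := by
    rw [sub_pos, div_lt_iff₀ h2]; nlinarith
  have hs1 : 1 / 2 - α * ε / (8 + 2 * ε) < 1 := by
    have : 0 ≤ α * ε / (8 + 2 * ε) := by positivity
    linarith
  refine ⟨⟨hrpos, hr1⟩, ⟨hspos, hs1⟩, ?_⟩
  have hden : 0 < (1 / 2 - α * ε / (8 + 2 * ε)) * (1 - (1 / 2 - α * ε / (8 + 2 * ε))) := by
    nlinarith
  rw [div_le_div_iff₀ hden (by norm_num)]
  have key : (1 / 2 - 2 * α * ε / (8 + 4 * ε) - (1 / 2 - α * ε / (8 + 2 * ε))) ^ 2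
      = (8 * (α * ε)) ^ 2 / ((8 + 2 * ε) * (8 + 4 * ε)) ^ 2 := by
    field_simp; ring
  rw [key]
  have hst : (1 / 2 - α * ε / (8 + 2 * ε)) * (1 - (1 / 2 - α * ε / (8 + 2 * ε)))
      ≥ 15 / 64 := by
    have ht : α * ε / (8 + 2 * ε) ≤ 1 / 8 := by
      rw [div_le_div_iff₀ h2 (by norm_num)]; nlinarith
    have ht0 : 0 ≤ α * ε / (8 + 2 * ε) := by positivity
    nlinarith [sq_nonneg (α * ε / (8 + 2 * ε))]
  have hnum : ((8 * (α * ε)) ^ 2) / ((8 + 2 * ε) * (8 + 4 * ε)) ^ 2 ≤ ε ^ 2 / 64 := by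
    rw [div_le_div_iff₀ (by positivity) (by norm_num)]
    have hα2 : α ^ 2 ≤ 1 := by nlinarith
    have h64 : (8 + 2 * ε) * (8 + 4 * ε) ≥ 64 := by nlinarith
    have hD : ((8 + 2 * ε) * (8 + 4 * ε)) ^ 2 ≥ 4096 := by nlinarith [h64, mul_pos h2 h4]
    have e1 : 0 ≤ ε ^ 2 * (((8 + 2 * ε) * (8 + 4 * ε)) ^ 2 - 4096) :=
      mul_nonneg (sq_nonneg ε) (by linarith)
    have e2 : 0 ≤ ε ^ 2 * (1 - α ^ 2) := mul_nonneg (sq_nonneg ε) (by linarith)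
    linarith [e1, e2]
  calc (8 * (α * ε)) ^ 2 / ((8 + 2 * ε) * (8 + 4 * ε)) ^ 2 * 8
      ≤ ε ^ 2 / 64 * 8 := by linarith
    _ ≤ ε ^ 2 * ((1 / 2 - α * ε / (8 + 2 * ε)) * (1 - (1 / 2 - α * ε / (8 + 2 * ε)))) := by
        nlinarith [sq_nonneg ε]
end

section
/- Let ε ∈ (0,1]. For every β ∈ [0,1], max{Exploit_{2ε}(q_β), Exploit_ε(q_β)} ≥ ε/15, where q_β := 1/2 − (2βε/(8+4ε) + (1−β)ε/(8+2ε)). In particular, no single strategy in the interpolating family has small exploitability simultaneously in both perturbed Matching Pennies games. -/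
/-- for ε ∈ (0,1] and every β ∈ [0,1],
`max{Exploit_{2ε}(q_β), Exploit_ε(q_β)} ≥ ε/15`, where
`q_β := 1/2 − (2βε/(8+4ε) + (1−β)ε/(8+2ε))`. -/
theorem stmt_16 (ε : ℝ) (hε : ε ∈ Set.Ioc (0 : ℝ) 1) :
    ∀ β ∈ Set.Icc (0 : ℝ) 1,
      ε / 15 ≤
        max (exploit (2 * ε) (1 / 2 - (2 * β * ε / (8 + 4 * ε) + (1 - β) * ε / (8 + 2 * ε))))
          (exploit ε (1 / 2 - (2 * β * ε / (8 + 4 * ε) + (1 - β) * ε / (8 + 2 * ε)))) := by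
  obtain ⟨hε0, hε1⟩ := hε
  intro β hβ
  obtain ⟨hβ0, hβ1⟩ := hβ
  set q : ℝ := 1 / 2 - (2 * β * ε / (8 + 4 * ε) + (1 - β) * ε / (8 + 2 * ε)) with hq
  have hX : (2 + 2 * ε) * q - 1 - (2 * ε / 2) / (2 + 2 * ε / 2) ≤ exploit (2 * ε) q := by
    unfold exploit
    exact sub_le_sub_right (le_max_left _ _) _
  have hY : 1 - 2 * q - (ε / 2) / (2 + ε / 2) ≤ exploit ε q := by
    unfold exploit
    exact sub_le_sub_right (le_max_right _ _) _
  have e1 : (2 * ε / 2) / (2 + 2 * ε / 2) = ε / (2 + ε) := by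
    rw [div_eq_div_iff (by linarith) (by linarith)]; ring
  have e2 : (ε / 2) / (2 + ε / 2) = ε / (4 + ε) := by
    rw [div_eq_div_iff (by linarith) (by linarith)]; ring
  rw [e1] at hX
  rw [e2] at hY
  have expand : 2 * ε * q - ε / (2 + ε) - ε / (4 + ε)
      = ε * (2 + 2 * ε * (1 - β)) / ((2 + ε) * (4 + ε)) := by
    rw [hq]; field_simp; ring
  have key : 2 * (ε / 15) ≤ 2 * ε * q - ε / (2 + ε) - ε / (4 + ε) := by
    rw [expand, le_div_iff₀ (by positivity)]
    nlinarith [mul_nonneg (mul_nonneg hε0.le hε0.le) (sub_nonneg.mpr hβ1),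
      mul_nonneg hε0.le (sub_nonneg.mpr hε1), sq_nonneg ε]
  have hm1 := le_max_left (exploit (2 * ε) q) (exploit ε q)
  have hm2 := le_max_right (exploit (2 * ε) q) (exploit ε q)
  linarith
end

section
/- Let X be a finite set, P a probability distribution on X, and X₁, …, Xₙ i.i.d. samples from P. Let P̂ be the empirical distribution P̂(x) := (1/n)·Σ_{i=1}^n 1{Xᵢ = x}. Then for every δ ∈ (0,1), with probability at least 1 − δ, Σ_{x ∈ X} |P(x) − P̂(x)| ≤ √(|X|/n) + √(2·log(1/δ)/n). -/
/-!
The ℓ₁ error `f(ω) = Σₓ |P(x) - P̂(x)|` of the empirical distribution changes by at most `2/n`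
when one sample is changed, since only two empirical frequencies move, each by `1/n`.
McDiarmid's inequality (proved by induction on `n`, peeling off the first sample and applying
Hoeffding's lemma to the conditional mean) makes `f - 𝔼 f` sub-Gaussian with parameter `1/n`,
so `f ≤ 𝔼 f + √(2 log(1/δ)/n)` with probability at least `1 - δ`. For the mean,
`𝔼 |P(x) - P̂(x)| ≤ √(Var P̂(x)) ≤ √(P(x)/n)`, and Cauchy–Schwarz gives
`Σₓ √(P(x)/n) ≤ √(|X|/n)`.
-/

open MeasureTheory ProbabilityTheory Real
open scoped NNReal

theorem MeasureTheory.integral_pi_fin_succ {α E : Type*} [MeasurableSpace α]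
    [NormedAddCommGroup E] [NormedSpace ℝ E] (μ : Measure α) [SigmaFinite μ] {n : ℕ}
    {F : (Fin (n + 1) → α) → E} (hF : Integrable F (Measure.pi fun _ ↦ μ)) :
    ∫ ω, F ω ∂(Measure.pi fun _ ↦ μ) =
      ∫ x, ∫ ρ, F (Fin.cons x ρ) ∂(Measure.pi fun _ ↦ μ) ∂μ := by
  have e := (measurePreserving_piFinSuccAbove (fun _ : Fin (n + 1) ↦ μ) 0).symm
  rw [← e.integral_comp', integral_prod]
  · simp [MeasurableEquiv.piFinSuccAbove_symm_apply, Fin.insertNthEquiv, Fin.insertNth_zero']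
  · exact (e.integrable_comp_emb (MeasurableEquiv.measurableEmbedding _)).2 hF

theorem ProbabilityTheory.integral_abs_sub_integral_le_sqrt_variance {Ω : Type*}
    [MeasurableSpace Ω] {μ : Measure Ω} [IsProbabilityMeasure μ] {Y : Ω → ℝ}
    (hY : MemLp Y 2 μ) : ∫ ω, |Y ω - ∫ ω', Y ω' ∂μ| ∂μ ≤ √(Var[Y; μ]) := by
  set Z : Ω → ℝ := fun ω ↦ |Y ω - ∫ ω', Y ω' ∂μ|
  have hZ : MemLp Z 2 μ := (hY.sub (memLp_const _)).abs
  have h := variance_nonneg Z μ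
  rw [variance_eq_sub hZ] at h
  rw [variance_eq_integral hY.aemeasurable]
  refine le_sqrt_of_sq_le ?_
  simpa [Z, sq_abs] using h

section McDiarmid

variable {X : Type*} [Finite X] [MeasurableSpace X] [MeasurableSingletonClass X]
  {P : Measure X} [IsProbabilityMeasure P]

theorem hasSubgaussianMGF_integral_cons_of_update_sub_le {n : ℕ} {f : (Fin (n + 1) → X) → ℝ}
    {c : ℝ≥0} (hf : ∀ ω i y, f (Function.update ω i y) - f ω ≤ c) :
    HasSubgaussianMGF
      (fun x ↦ ∫ ρ, f (Fin.cons x ρ) ∂(Measure.pi fun _ ↦ P) -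
        ∫ x', ∫ ρ, f (Fin.cons x' ρ) ∂(Measure.pi fun _ ↦ P) ∂P) ((c / 2) ^ 2) P := by
  set g : X → ℝ := fun x ↦ ∫ ρ, f (Fin.cons x ρ) ∂(Measure.pi fun _ ↦ P)
  have := nonempty_of_isProbabilityMeasure P
  obtain ⟨x₀, hx₀⟩ := Finite.exists_min g
  have hg_le (x : X) : g x ≤ g x₀ + c :=
    calc g x ≤ ∫ ρ, (f (Fin.cons x₀ ρ) + c) ∂(Measure.pi fun _ ↦ P) :=
          integral_mono .of_finite .of_finite fun ρ ↦ by
            have := hf (Fin.cons x₀ ρ) 0 x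
            rw [Fin.update_cons_zero] at this
            linarith
      _ = g x₀ + c := by simp [g, integral_add .of_finite (integrable_const _)]
  simpa using hasSubgaussianMGF_of_mem_Icc (a := g x₀) (b := g x₀ + c) (μ := P)
    .of_discrete (ae_of_all _ fun x ↦ ⟨hx₀ x, hg_le x⟩)

theorem hasSubgaussianMGF_sub_integral_of_update_sub_le {c : ℝ≥0} :
    ∀ {n : ℕ} {f : (Fin n → X) → ℝ}, (∀ ω i y, f (Function.update ω i y) - f ω ≤ c) →
      HasSubgaussianMGF (fun ω ↦ f ω - ∫ ω', f ω' ∂(Measure.pi fun _ ↦ P)) (n * (c / 2) ^ 2)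
        (Measure.pi fun _ ↦ P)
  | 0, f, _ => by
    convert HasSubgaussianMGF.fun_zero with ω
    · simp [integral_unique, Subsingleton.elim ω default]
    · simp
    · infer_instance
  | n + 1, f, hf => by
    set μ := Measure.pi fun _ : Fin n ↦ P
    set g : X → ℝ := fun x ↦ ∫ ρ, f (Fin.cons x ρ) ∂μ
    have hfx (x : X) : HasSubgaussianMGF (fun ρ ↦ f (Fin.cons x ρ) - g x) (n * (c / 2) ^ 2) μ :=
      hasSubgaussianMGF_sub_integral_of_update_sub_le fun ρ i y ↦ by
        simpa [Fin.cons_update] using hf (Fin.cons x ρ) i.succ y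
    have hg : HasSubgaussianMGF (fun x ↦ g x - ∫ x, g x ∂P) ((c / 2) ^ 2) P :=
      hasSubgaussianMGF_integral_cons_of_update_sub_le hf
    have hint : ∫ ω, f ω ∂(Measure.pi fun _ ↦ P) = ∫ x, g x ∂P :=
      integral_pi_fin_succ P .of_finite
    refine ⟨fun t ↦ .of_finite, fun t ↦ ?_⟩
    calc mgf (fun ω ↦ f ω - ∫ ω', f ω' ∂(Measure.pi fun _ ↦ P)) (Measure.pi fun _ ↦ P) t
        = ∫ x, exp (t * (g x - ∫ x, g x ∂P)) * mgf (fun ρ ↦ f (Fin.cons x ρ) - g x) μ t ∂P := by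
          simp only [mgf]
          rw [integral_pi_fin_succ P .of_finite, hint]
          refine integral_congr_ae (ae_of_all _ fun x ↦ ?_)
          dsimp only
          rw [← integral_const_mul]
          congr 1 with ρ
          rw [← exp_add]
          ring_nf
      _ ≤ ∫ x, exp (t * (g x - ∫ x, g x ∂P)) * exp (↑(n * (c / 2) ^ 2 : ℝ≥0) * t ^ 2 / 2) ∂P :=
          integral_mono .of_finite .of_finite fun x ↦ by
            gcongr
            exact (hfx x).mgf_le t
      _ ≤ exp (↑((c / 2) ^ 2 : ℝ≥0) * t ^ 2 / 2) * exp (↑(n * (c / 2) ^ 2 : ℝ≥0) * t ^ 2 / 2) := by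
          rw [integral_mul_const, ← mgf]
          gcongr
          exact hg.mgf_le t
      _ = exp (↑(↑(n + 1) * (c / 2) ^ 2 : ℝ≥0) * t ^ 2 / 2) := by
          rw [← exp_add]
          push_cast
          ring_nf

theorem measureReal_sub_integral_ge_le_of_update_sub_le {n : ℕ} {f : (Fin n → X) → ℝ}
    {c : ℝ≥0} (hf : ∀ ω i y, f (Function.update ω i y) - f ω ≤ c) {ε : ℝ} (hε : 0 ≤ ε) :
    (Measure.pi fun _ ↦ P).real {ω | ε ≤ f ω - ∫ ω', f ω' ∂(Measure.pi fun _ ↦ P)} ≤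
      exp (-2 * ε ^ 2 / (n * c ^ 2)) := by
  refine ((hasSubgaussianMGF_sub_integral_of_update_sub_le hf).measure_ge_le hε).trans_eq ?_
  congr 1
  push_cast
  ring

end McDiarmid

section Empirical

variable {X : Type*} [DecidableEq X]

/-- For `n = 0` this is `0`, as `1 / 0 = 0`. -/
noncomputable def empiricalFreq {n : ℕ} (ω : Fin n → X) (x : X) : ℝ :=
  1 / n * ∑ i, if ω i = x then 1 else 0

theorem empiricalFreq_update_sub {n : ℕ} (ω : Fin n → X) (i : Fin n) (y x : X) :
    empiricalFreq (Function.update ω i y) x - empiricalFreq ω x =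
      1 / n * ((if y = x then 1 else 0) - if ω i = x then 1 else 0) := by
  rw [empiricalFreq, empiricalFreq, ← mul_sub, ← Finset.sum_sub_distrib,
    Finset.sum_eq_single i (fun j _ hj ↦ by simp [Function.update_of_ne hj]) (by simp)]
  simp

variable [Fintype X] [MeasurableSpace X] (P : Measure X)

noncomputable def empiricalL1Dist {n : ℕ} (ω : Fin n → X) : ℝ :=
  ∑ x, |P.real {x} - empiricalFreq ω x|

theorem empiricalL1Dist_update_sub_le {n : ℕ} (ω : Fin n → X) (i : Fin n) (y : X) :
    empiricalL1Dist P (Function.update ω i y) - empiricalL1Dist P ω ≤ 2 / n := by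
  calc empiricalL1Dist P (Function.update ω i y) - empiricalL1Dist P ω
      ≤ ∑ x, |empiricalFreq (Function.update ω i y) x - empiricalFreq ω x| := by
        rw [empiricalL1Dist, empiricalL1Dist, ← Finset.sum_sub_distrib]
        gcongr with x
        refine (abs_sub_abs_le_abs_sub _ _).trans_eq ?_
        rw [sub_sub_sub_cancel_left, abs_sub_comm]
    _ ≤ ∑ x, 1 / (n : ℝ) * ((if y = x then 1 else 0) + if ω i = x then 1 else 0) := by
        gcongr with x
        rw [empiricalFreq_update_sub, abs_mul, abs_of_nonneg (by positivity)]
        gcongr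
        split_ifs <;> norm_num
    _ = 2 / n := by
        rw [← Finset.mul_sum, Finset.sum_add_distrib]
        simp only [Finset.sum_ite_eq, Finset.mem_univ, if_true]
        ring

variable [MeasurableSingletonClass X] [IsProbabilityMeasure P]

theorem integral_empiricalFreq {n : ℕ} (hn : n ≠ 0) (x : X) :
    ∫ ω, empiricalFreq ω x ∂(Measure.pi fun _ : Fin n ↦ P) = P.real {x} := by
  simp only [empiricalFreq]
  rw [integral_const_mul, integral_finsetSum _ fun i _ ↦ .of_finite]
  simp_rw [integral_comp_eval (μ := fun _ : Fin n ↦ P) (f := fun y ↦ if y = x then (1 : ℝ) else 0)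
    .of_discrete]
  rw [integral_fintype .of_finite]
  field_simp
  simp

theorem variance_empiricalFreq_le {n : ℕ} (x : X) :
    Var[fun ω ↦ empiricalFreq ω x; Measure.pi fun _ : Fin n ↦ P] ≤ P.real {x} / n := by
  have h : (fun ω ↦ empiricalFreq ω x) =
      ∑ i : Fin n, fun ω : Fin n → X ↦ 1 / (n : ℝ) * (if ω i = x then 1 else 0) := by
    ext ω; simp only [empiricalFreq, Finset.sum_apply, Finset.mul_sum]
  rw [h, variance_sum_pi (X := fun _ y ↦ 1 / (n : ℝ) * if y = x then 1 else 0)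
    fun _ ↦ .of_discrete]
  simp_rw [variance_const_mul]
  have hind : Var[fun y ↦ if y = x then (1 : ℝ) else 0; P] ≤ P.real {x} := by
    refine (variance_le_expectation_sq .of_discrete).trans_eq ?_
    rw [integral_fintype .of_finite]
    simp
  have hn : (n : ℝ) * (1 / n) ^ 2 = 1 / n := by
    rcases eq_or_ne (n : ℝ) 0 with h | h
    · simp [h]
    · field_simp
  rw [Finset.sum_const, Finset.card_univ, Fintype.card_fin, nsmul_eq_mul, ← mul_assoc, hn,
    one_div_mul_eq_div]
  gcongr

theorem integral_empiricalL1Dist_le {n : ℕ} (hn : n ≠ 0) :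
    ∫ ω, empiricalL1Dist P ω ∂(Measure.pi fun _ : Fin n ↦ P) ≤ √(Fintype.card X / n) := by
  have hdev (x : X) : ∫ ω, |P.real {x} - empiricalFreq ω x| ∂(Measure.pi fun _ : Fin n ↦ P) ≤
      √(P.real {x} / n) :=
    calc ∫ ω, |P.real {x} - empiricalFreq ω x| ∂(Measure.pi fun _ : Fin n ↦ P)
        = ∫ ω, |empiricalFreq ω x - ∫ ω', empiricalFreq ω' x ∂(Measure.pi fun _ : Fin n ↦ P)|
            ∂(Measure.pi fun _ : Fin n ↦ P) := by
          simp_rw [integral_empiricalFreq P hn, abs_sub_comm]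
      _ ≤ √(Var[fun ω ↦ empiricalFreq ω x; Measure.pi fun _ : Fin n ↦ P]) :=
          integral_abs_sub_integral_le_sqrt_variance .of_discrete
      _ ≤ √(P.real {x} / n) := sqrt_le_sqrt (variance_empiricalFreq_le P x)
  calc ∫ ω, empiricalL1Dist P ω ∂(Measure.pi fun _ : Fin n ↦ P)
      = ∑ x, ∫ ω, |P.real {x} - empiricalFreq ω x| ∂(Measure.pi fun _ : Fin n ↦ P) :=
        integral_finsetSum _ fun _ _ ↦ .of_finite
    _ ≤ ∑ x, √1 * √(P.real {x} / n) := by simpa using Finset.sum_le_sum fun x _ ↦ hdev x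
    _ ≤ √(∑ _ : X, 1) * √(∑ x, P.real {x} / n) :=
        sum_sqrt_mul_sqrt_le _ (fun _ ↦ zero_le_one) fun _ ↦ by positivity
    _ = √(Fintype.card X / n) := by
        rw [← Finset.sum_div, sum_measureReal_singleton, ← sqrt_mul (by positivity)]
        simp [div_eq_mul_inv]

end Empirical

/-- let `X` be a finite set, `P` a probability distribution on `X`, and
`X₁, …, Xₙ` i.i.d. samples from `P` (modelled by the product measure `P^{⊗n}` on
`X^n`, the `i`-th sample being the `i`-th coordinate `ω i`). With
`P̂(x) := (1/n)·Σᵢ 1{Xᵢ = x}` the empirical distribution, for every `δ ∈ (0,1)`,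
with probability at least `1 − δ`,
`Σ_{x ∈ X} |P(x) − P̂(x)| ≤ √(|X|/n) + √(2·log(1/δ)/n)`. -/
theorem stmt_18 {X : Type*} [Fintype X] [DecidableEq X]
    [MeasurableSpace X] [MeasurableSingletonClass X]
    (P : Measure X) [IsProbabilityMeasure P]
    (n : ℕ) (hn : 0 < n) (δ : ℝ) (hδ : δ ∈ Set.Ioo (0 : ℝ) 1) :
    ENNReal.ofReal (1 - δ) ≤
      (Measure.pi fun _ : Fin n => P)
        {ω | ∑ x : X,
            |(P {x}).toReal - (1 / n) * ∑ i : Fin n, (if ω i = x then (1 : ℝ) else 0)| ≤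
          Real.sqrt (Fintype.card X / n) + Real.sqrt (2 * Real.log (1 / δ) / n)} := by
  obtain ⟨hδ0, hδ1⟩ := hδ
  set μ := Measure.pi fun _ : Fin n ↦ P
  set ε := √(2 * log (1 / δ) / n)
  set bad := {ω | ε ≤ empiricalL1Dist P ω - ∫ ω', empiricalL1Dist P ω' ∂μ}
  have hbad : μ.real bad ≤ δ := by
    refine (measureReal_sub_integral_ge_le_of_update_sub_le (c := 2 / n)
      (fun ω i y ↦ by simpa using empiricalL1Dist_update_sub_le P ω i y)
      (sqrt_nonneg _)).trans_eq ?_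
    have hlog : 0 ≤ log (1 / δ) := log_nonneg (one_le_one_div hδ0 hδ1.le)
    rw [sq_sqrt (by positivity), one_div, log_inv]
    push_cast
    field_simp
    rw [exp_log hδ0]
  have hmean := integral_empiricalL1Dist_le P hn.ne'
  calc ENNReal.ofReal (1 - δ) ≤ ENNReal.ofReal (μ.real badᶜ) := by
        rw [probReal_compl_eq_one_sub .of_discrete]
        gcongr
    _ ≤ μ _ := by
        rw [ofReal_measureReal]
        refine measure_mono fun ω hω ↦ ?_
        simp only [bad, Set.mem_compl_iff, Set.mem_ofPred_eq, not_le] at hω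
        change empiricalL1Dist P ω ≤ _
        linarith
end
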